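/- (MacWilliams identity for binary codes.) Let C be a linear code of length N over the field with two elements, i.e., a linear subspace C ⊆ (ZMod 2)^N, and let C^⊥ = { v : ∀ u ∈ C, Σ_i u_i v_i = 0 } be its dual code. Define the weight enumerator W_C(x,y) = Σ_{u∈C} x^{N − wt(u)} y^{wt(u)}, where wt(u) is the Hamming weight of u. Then for all real (or complex) x, y: W_C(x,y) = |C^⊥|^{-1} · W_{C^⊥}(x + y, x − y). -/

import Mathlib

/-!
Poisson summation over a linear code: for a nontrivial additive character `ψ` of `K`, the sum of
`ψ (u ⬝ᵥ v)` over `v ∈ C^⊥` is `|C^⊥|` when `u ∈ C^⊥⊥ = C` and `0` otherwise, so summing the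
transform `f̂ v = ∑ u, ψ (u ⬝ᵥ v) f u` over `C^⊥` gives `|C^⊥| ∑_{u ∈ C} f u`.
Over `ZMod 2` with `ψ a = (-1)^a` the monomial `x^(N - wt u) y^(wt u)` is a product over the
coordinates, so its transform is the product of the one-coordinate transforms
`x + (-1)^(v i) y`, which is `(x + y)^(N - wt v) (x - y)^(wt v)`.
-/

open Finset Classical

def hammingWt {N : ℕ} (u : Fin N → ZMod 2) : ℕ :=
  (univ.filter fun i => u i ≠ 0).card

theorem AddChar.map_sum_eq_prod {A M ι : Type*} [AddCommMonoid A] [CommMonoid M]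
    (ψ : AddChar A M) (s : Finset ι) (f : ι → A) : ψ (∑ i ∈ s, f i) = ∏ i ∈ s, ψ (f i) := by
  simpa [← ofAdd_sum] using map_prod ψ.toMonoidHom (fun i => Multiplicative.ofAdd (f i)) s

section DualCode

variable {K ι : Type*} [Field K] [Fintype ι]

def dualCode (C : Submodule K (ι → K)) : Submodule K (ι → K) :=
  LinearMap.BilinForm.orthogonal (dotProductBilin K K) C

theorem mem_dualCode {C : Submodule K (ι → K)} {v : ι → K} :
    v ∈ dualCode C ↔ ∀ u ∈ C, u ⬝ᵥ v = 0 :=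
  Iff.rfl

theorem forall_mem_dualCode_dotProduct_eq_zero_iff (C : Submodule K (ι → K)) (u : ι → K) :
    (∀ v ∈ dualCode C, u ⬝ᵥ v = 0) ↔ u ∈ C := by
  rw [← Subspace.forall_mem_dualAnnihilator_apply_eq_zero_iff,
    (dotProductEquiv K ι).surjective.forall]
  simp [mem_dualCode, dotProduct_comm]

theorem AddChar.compAddMonoidHom_linearMap_eq_zero_iff {M V : Type*} [CommMonoid M]
    [AddCommGroup V] [Module K V] {ψ : AddChar K M} (hψ : ψ ≠ 0) (φ : V →ₗ[K] K) :
    ψ.compAddMonoidHom φ.toAddMonoidHom = 0 ↔ φ = 0 := by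
  refine ⟨fun h => by_contra fun hφ => hψ ?_, fun h => by ext; simp [h]⟩
  exact AddChar.compAddMonoidHom_injective_left φ.toAddMonoidHom
    (LinearMap.surjective_of_ne_zero hφ) (h.trans rfl)

variable {R : Type*} [CommRing R] [IsDomain R] {ψ : AddChar K R} [Fintype K] [DecidableEq ι]

theorem sum_addChar_dotProduct_dualCode (hψ : ψ ≠ 0) (C : Submodule K (ι → K)) (u : ι → K) :
    ∑ v : dualCode C, ψ (u ⬝ᵥ v) = if u ∈ C then (Fintype.card (dualCode C) : R) else 0 := by
  let φ : dualCode C →ₗ[K] K := (dotProductBilin K K u).comp (dualCode C).subtype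
  have hφ : φ = 0 ↔ u ∈ C := by
    rw [← forall_mem_dualCode_dotProduct_eq_zero_iff, LinearMap.ext_iff, Subtype.forall]
    rfl
  rw [← hφ, ← AddChar.compAddMonoidHom_linearMap_eq_zero_iff hψ φ]
  exact AddChar.sum_eq_ite (ψ.compAddMonoidHom φ.toAddMonoidHom)

theorem sum_dualCode_sum_addChar_dotProduct_mul (hψ : ψ ≠ 0) (C : Submodule K (ι → K))
    (f : (ι → K) → R) :
    ∑ v : dualCode C, ∑ u, ψ (u ⬝ᵥ v) * f u = Fintype.card (dualCode C) * ∑ u : C, f u := by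
  calc ∑ v : dualCode C, ∑ u, ψ (u ⬝ᵥ v) * f u
      = ∑ u, (∑ v : dualCode C, ψ (u ⬝ᵥ v)) * f u := by
        rw [Finset.sum_comm]; simp only [Finset.sum_mul]
    _ = ∑ u with u ∈ C, Fintype.card (dualCode C) * f u := by
        rw [Finset.sum_filter]
        exact Finset.sum_congr rfl fun u _ => by
          rw [sum_addChar_dotProduct_dualCode hψ, ite_mul, zero_mul]
    _ = Fintype.card (dualCode C) * ∑ u : C, f u := by
        rw [← Finset.mul_sum, Finset.sum_subtype _ fun _ => Finset.mem_filter_univ _]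

end DualCode

section Binary

variable {R : Type*} [CommRing R]

def signChar : AddChar (ZMod 2) R := AddChar.zmodChar 2 (neg_one_sq (R := R))

theorem signChar_one : signChar (1 : ZMod 2) = (-1 : R) :=
  pow_one _

theorem signChar_ne_zero (h : (-1 : R) ≠ 1) : (signChar : AddChar (ZMod 2) R) ≠ 0 :=
  fun h0 => h (by simpa [signChar_one] using DFunLike.congr_fun h0 1)

theorem prod_ite_eq_zero_eq_pow_hammingWt {N : ℕ} (v : Fin N → ZMod 2) (a b : R) :
    ∏ i, (if v i = 0 then a else b) = a ^ (N - hammingWt v) * b ^ hammingWt v := by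
  have hcard := Finset.card_filter_add_card_filter_not (s := univ) (p := fun i => v i = 0)
  rw [Finset.card_univ, Fintype.card_fin] at hcard
  rw [Finset.prod_ite, Finset.prod_const, Finset.prod_const, Nat.eq_sub_of_add_eq hcard]
  rfl

theorem sum_signChar_mul_mul_ite (c : ZMod 2) (x y : R) :
    ∑ b : ZMod 2, signChar (b * c) * (if b = 0 then x else y) =
      if c = 0 then x + y else x - y := by
  rw [show (univ : Finset (ZMod 2)) = {0, 1} from rfl, Finset.sum_pair zero_ne_one]
  obtain rfl | rfl : c = 0 ∨ c = 1 := by decide +revert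
  all_goals simp [signChar_one, sub_eq_add_neg]

theorem sum_signChar_dotProduct_mul_pow_hammingWt {N : ℕ} (v : Fin N → ZMod 2) (x y : R) :
    ∑ u, signChar (u ⬝ᵥ v) * (x ^ (N - hammingWt u) * y ^ hammingWt u) =
      (x + y) ^ (N - hammingWt v) * (x - y) ^ hammingWt v := by
  calc ∑ u, signChar (u ⬝ᵥ v) * (x ^ (N - hammingWt u) * y ^ hammingWt u)
      = ∑ u : Fin N → ZMod 2, ∏ i, signChar (u i * v i) * (if u i = 0 then x else y) := by
        simp only [Finset.prod_mul_distrib, prod_ite_eq_zero_eq_pow_hammingWt, dotProduct,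
          AddChar.map_sum_eq_prod]
    _ = ∏ i, ∑ b : ZMod 2, signChar (b * v i) * (if b = 0 then x else y) :=
        (Fintype.prod_sum fun i (b : ZMod 2) => signChar (b * v i) * if b = 0 then x else y).symm
    _ = (x + y) ^ (N - hammingWt v) * (x - y) ^ hammingWt v := by
        simp only [sum_signChar_mul_mul_ite, prod_ite_eq_zero_eq_pow_hammingWt]

end Binary

/-- MacWilliams identity: for a binary linear code `C ⊆ (ZMod 2)^N` with dual
code `C^⊥ = {v : ∀ u ∈ C, Σ_i u_i v_i = 0}`, the weight enumerator satisfies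
`W_C(x, y) = |C^⊥|⁻¹ · W_{C^⊥}(x + y, x - y)`. -/
theorem macwilliams_identity (N : ℕ) (C : Submodule (ZMod 2) (Fin N → ZMod 2)) (x y : ℝ) :
    ∑ u ∈ univ.filter (fun u : Fin N → ZMod 2 => u ∈ C),
        x ^ (N - hammingWt u) * y ^ hammingWt u
      = ((univ.filter fun v : Fin N → ZMod 2 => ∀ u ∈ C, ∑ i, u i * v i = 0).card : ℝ)⁻¹ *
        ∑ v ∈ univ.filter (fun v : Fin N → ZMod 2 => ∀ u ∈ C, ∑ i, u i * v i = 0),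
          (x + y) ^ (N - hammingWt v) * (x - y) ^ hammingWt v := by
  have hdual (v : Fin N → ZMod 2) : (∀ u ∈ C, ∑ i, u i * v i = 0) ↔ v ∈ dualCode C :=
    mem_dualCode.symm
  have key := sum_dualCode_sum_addChar_dotProduct_mul (signChar_ne_zero (by norm_num)) C
    fun u => x ^ (N - hammingWt u) * y ^ hammingWt u
  simp only [sum_signChar_dotProduct_mul_pow_hammingWt] at key
  rw [Finset.sum_subtype _ fun _ => Finset.mem_filter_univ _,
    Finset.sum_subtype _ fun v => (Finset.mem_filter_univ v).trans (hdual v),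
    ← Fintype.card_subtype, Fintype.card_congr (Equiv.subtypeEquivRight hdual), key,
    inv_mul_cancel_left₀ (Nat.cast_ne_zero.2 Fintype.card_ne_zero)]
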